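/- Let f(θ) = 2/cos(θ/2) + 1/(cos(θ/2)·sin(θ/2)) + tan(θ/2). If 0 < θ < π and f(θ) = 3·√3, then θ = π/3; equivalently, for every θ ∈ (0,π) with θ ≠ π/3 one has f(θ) > 3·√3. -/

import Mathlib

/-!
Put `s = sin (θ/2)`, `c = cos (θ/2)`. Over the common denominator `s c` the ribbonlength is
`(1 + s)² / (s c)`, so `f(θ) = 3√3` squares, via `c² = 1 - s²` and division by `1 + s`, to
`(1 + s)³ = 27 s² (1 - s)`. The difference of the two sides factors as `(2s - 1)² (7s + 1)`,
and since `s > 0` this forces `s = 1/2`, i.e. `θ/2 = π/6`.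
-/

open Real

lemma eq_half_of_one_add_cube_eq {s : ℝ} (hs : -(1 / 7) < s)
    (h : (1 + s) ^ 3 = 27 * s ^ 2 * (1 - s)) : s = 1 / 2 := by
  have hfactor : (2 * s - 1) ^ 2 * (7 * s + 1) = 0 := by linear_combination h
  have hsq : (2 * s - 1) ^ 2 = 0 := (mul_eq_zero.mp hfactor).resolve_right (by linarith)
  linarith [(pow_eq_zero_iff two_ne_zero).mp hsq]

lemma eq_half_of_one_add_sq_eq_three_sqrt_three_mul {s c : ℝ} (hs : 0 < s)
    (hsc : s ^ 2 + c ^ 2 = 1) (h : (1 + s) ^ 2 = 3 * √3 * (s * c)) : s = 1 / 2 := by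
  have hsqrt : √3 ^ 2 = 3 := sq_sqrt (by norm_num)
  have hquartic : (1 + s) * ((1 + s) ^ 3 - 27 * s ^ 2 * (1 - s)) = 0 := by
    linear_combination ((1 + s) ^ 2 + 3 * √3 * (s * c)) * h + 9 * s ^ 2 * c ^ 2 * hsqrt
      + 27 * s ^ 2 * hsc
  refine eq_half_of_one_add_cube_eq (by linarith) ?_
  exact sub_eq_zero.mp ((mul_eq_zero.mp hquartic).resolve_left (by linarith))

lemma ribbonlength_eq {x : ℝ} (hs : sin x ≠ 0) (hc : cos x ≠ 0) :
    2 / cos x + 1 / (cos x * sin x) + tan x = (1 + sin x) ^ 2 / (sin x * cos x) := by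
  rw [tan_eq_sin_div_cos]
  field_simp
  ring

theorem ribbonlength_minimizer_unique (θ : ℝ) (h1 : 0 < θ) (h2 : θ < π)
    (hf : 2 / Real.cos (θ / 2) + 1 / (Real.cos (θ / 2) * Real.sin (θ / 2)) + Real.tan (θ / 2)
        = 3 * Real.sqrt 3) :
    θ = π / 3 := by
  have hs : 0 < sin (θ / 2) := sin_pos_of_pos_of_lt_pi (by linarith) (by linarith)
  have hc : 0 < cos (θ / 2) := cos_pos_of_mem_Ioo ⟨by linarith, by linarith⟩
  rw [ribbonlength_eq hs.ne' hc.ne', div_eq_iff (by positivity)] at hf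
  have hhalf : sin (θ / 2) = sin (π / 6) := by
    rw [sin_pi_div_six]
    exact eq_half_of_one_add_sq_eq_three_sqrt_three_mul hs (sin_sq_add_cos_sq _) hf
  have hθ := injOn_sin ⟨by linarith, by linarith⟩ ⟨by linarith [pi_pos], by linarith [pi_pos]⟩ hhalf
  linarith
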